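/- Let R be a commutative Noetherian ring and I = (f_0, …, f_m) ⊆ R an ideal of grade at least 2 with free presentation R^p →^M R^{m+1} →^f R, where f = (f_0, …, f_m). Then the image of the transpose map M^t : (R^{m+1})^* → (R^p)^* has rank m, i.e., the kernel of M^t is a rank-one free module generated by the vector (f_0, …, f_m). -/

import Mathlib

/-!
A vector `v` lies in `ker Mᵀ` iff it annihilates the image of `M`, which by exactness is the
module of syzygies of `f`. Pairing `v` with the Koszul-type syzygies `(f ⬝ a) eᵢ - fᵢ a` gives
`(f ⬝ a) v = (v ⬝ a) f` for every `a`. Writing a regular sequence `x, y` in `I` as `x = f ⬝ a`,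
`y = f ⬝ b`, this yields `y (v ⬝ a) = x (v ⬝ b)`; regularity of `y` modulo `x` gives
`v ⬝ a = c x`, and then `x v = x (c f)` with `x` a nonzerodivisor forces `v = c f`.
-/

open Matrix

namespace Matrix

variable {R : Type*} [CommRing R]

theorem mem_ker_transpose_mulVecLin_iff {m n : Type*} [Fintype m] [Fintype n] [DecidableEq n]
    (M : Matrix m n R) (v : m → R) :
    v ∈ LinearMap.ker Mᵀ.mulVecLin ↔ ∀ w ∈ LinearMap.range M.mulVecLin, v ⬝ᵥ w = 0 := by
  simp only [LinearMap.mem_ker, mulVecLin_apply, LinearMap.mem_range, forall_exists_index,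
    forall_apply_eq_imp_iff, dotProduct_mulVec, mulVec_transpose, dotProduct_eq_zero_iff]

theorem mem_ker_mulVecLin_replicateRow_iff {ι n : Type*} [Fintype n] [Nonempty ι]
    (f w : n → R) : w ∈ LinearMap.ker (replicateRow ι f).mulVecLin ↔ f ⬝ᵥ w = 0 := by
  simp [replicateRow_mulVec_eq_const]

end Matrix

theorem RingTheory.Sequence.IsRegular.mem_span_singleton_of_mul_mem {R : Type*} [CommRing R]
    {x y : R} (hreg : IsRegular R [x, y]) {r : R} (hr : y * r ∈ Ideal.span {x}) :
    r ∈ Ideal.span {x} := by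
  simp only [isRegular_cons_iff] at hreg
  rw [← Ideal.mul_top (Ideal.span {x}), ← smul_eq_mul, Submodule.ideal_span_singleton_smul]
    at hr ⊢
  exact mem_of_isSMulRegular_quotient_of_smul_mem hreg.2.1 hr

section Proportional

variable {R ι : Type*} [CommRing R] [Fintype ι] {f v : ι → R}

theorem exists_dotProduct_eq_of_mem_span_range {x : R} (hx : x ∈ Ideal.span (Set.range f)) :
    ∃ a, f ⬝ᵥ a = x := by
  obtain ⟨a, rfl⟩ := Ideal.mem_span_range_iff_exists_fun.mp hx
  exact ⟨a, by simp only [dotProduct, mul_comm]⟩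

theorem dotProduct_smul_eq_of_forall_dotProduct_eq_zero [DecidableEq ι]
    (h : ∀ w, f ⬝ᵥ w = 0 → v ⬝ᵥ w = 0) (a : ι → R) : (f ⬝ᵥ a) • v = (v ⬝ᵥ a) • f := by
  ext i
  have hsyz : f ⬝ᵥ ((f ⬝ᵥ a) • Pi.single i 1 - f i • a) = 0 := by
    simp only [dotProduct_sub, dotProduct_smul, dotProduct_single, smul_eq_mul]
    ring
  have hv := h _ hsyz
  simp only [dotProduct_sub, dotProduct_smul, dotProduct_single, smul_eq_mul] at hv
  simp only [Pi.smul_apply, smul_eq_mul]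
  linear_combination hv

theorem mem_span_singleton_of_dotProduct_smul_eq {x y : R}
    (hv : ∀ a, (f ⬝ᵥ a) • v = (v ⬝ᵥ a) • f) (hx : x ∈ Ideal.span (Set.range f))
    (hy : y ∈ Ideal.span (Set.range f)) (hreg : RingTheory.Sequence.IsRegular R [x, y]) :
    v ∈ Submodule.span R {f} := by
  obtain ⟨a, rfl⟩ := exists_dotProduct_eq_of_mem_span_range hx
  obtain ⟨b, rfl⟩ := exists_dotProduct_eq_of_mem_span_range hy
  have hmul : (f ⬝ᵥ b) * (v ⬝ᵥ a) = (f ⬝ᵥ a) * (v ⬝ᵥ b) := by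
    have := congrArg (· ⬝ᵥ b) (hv a)
    simp only [smul_dotProduct, smul_eq_mul] at this
    linear_combination -this
  obtain ⟨c, hc⟩ := Ideal.mem_span_singleton'.mp <| hreg.mem_span_singleton_of_mul_mem <|
    Ideal.mem_span_singleton'.mpr ⟨v ⬝ᵥ b, by rw [hmul, mul_comm]⟩
  have hx_reg : IsSMulRegular (ι → R) (f ⬝ᵥ a) :=
    .pi fun _ => ((RingTheory.Sequence.isRegular_cons_iff _ _ _).mp hreg).1
  refine Submodule.mem_span_singleton.mpr ⟨c, hx_reg ?_⟩
  change (f ⬝ᵥ a) • c • f = (f ⬝ᵥ a) • v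
  rw [hv a, ← hc, smul_smul, mul_comm]

end Proportional

theorem kernel_of_transpose_eq_span_of_grade_ge_two_general
    (R : Type*) [CommRing R] (m p : ℕ)
    (M : Matrix (Fin (m + 1)) (Fin p) R) (f : Fin (m + 1) → R)
    (hexact : LinearMap.range M.mulVecLin =
      LinearMap.ker (Matrix.mulVecLin (Matrix.of (fun (_ : Fin 1) j => f j))))
    (hgrade : ∃ x y : R, x ∈ Ideal.span (Set.range f) ∧ y ∈ Ideal.span (Set.range f) ∧
      RingTheory.Sequence.IsRegular R [x, y]) :
    LinearMap.ker M.transpose.mulVecLin = Submodule.span R {f} := by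
  obtain ⟨x, y, hx, hy, hreg⟩ := hgrade
  have hker (v : Fin (m + 1) → R) :
      v ∈ LinearMap.ker Mᵀ.mulVecLin ↔ ∀ w, f ⬝ᵥ w = 0 → v ⬝ᵥ w = 0 := by
    rw [mem_ker_transpose_mulVecLin_iff, hexact]
    exact forall_congr' fun w => imp_congr_left (mem_ker_mulVecLin_replicateRow_iff f w)
  apply le_antisymm
  · intro v hv
    exact mem_span_singleton_of_dotProduct_smul_eq
      (dotProduct_smul_eq_of_forall_dotProduct_eq_zero ((hker v).mp hv)) hx hy hreg
  · rw [Submodule.span_singleton_le_iff_mem, hker]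
    exact fun _ hw => hw

/-- Let `R` be a commutative Noetherian ring and `I = (f₀, …, f_m)` an ideal of
grade at least 2 with a free presentation `R^p →^M R^{m+1} →^f R` (exactness in the middle:
the image of `M` is exactly the syzygy module of `f`).  Then the kernel of the transpose map
`M^t : (R^{m+1})^* → (R^p)^*` is the rank-one free module generated by the vector
`(f₀, …, f_m)`; in particular the image of `M^t` has rank `m`. -/
theorem kernel_of_transpose_eq_span_of_grade_ge_two
    (R : Type*) [CommRing R] [IsNoetherianRing R] (m p : ℕ)
    (M : Matrix (Fin (m + 1)) (Fin p) R) (f : Fin (m + 1) → R)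
    (hexact : LinearMap.range M.mulVecLin =
      LinearMap.ker (Matrix.mulVecLin (Matrix.of (fun (_ : Fin 1) j => f j))))
    (hgrade : ∃ x y : R, x ∈ Ideal.span (Set.range f) ∧ y ∈ Ideal.span (Set.range f) ∧
      RingTheory.Sequence.IsRegular R [x, y]) :
    LinearMap.ker M.transpose.mulVecLin = Submodule.span R {f} :=
  kernel_of_transpose_eq_span_of_grade_ge_two_general R m p M f hexact hgrade
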